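/- First variation of the Fisher information: let μ : 𝕋^n → ℝ be smooth and strictly positive and ξ : 𝕋^n → ℝ smooth. Then d/dε|_{ε=0} ∫ |∇ln(μ+εξ)|² (μ+εξ) dx = ∫ (|∇ln μ|² − (2/μ)Δμ) ξ dx. -/

import Mathlib

open MeasureTheory Real
noncomputable section

/-- Partial derivative in direction `k`. -/
def pd {n : ℕ} (f : (Fin n → ℝ) → ℝ) (k : Fin n) (x : Fin n → ℝ) : ℝ :=
  fderiv ℝ f x (Pi.single k 1)

/-- Gradient of a real-valued function on ℝ^n. -/
def grad {n : ℕ} (f : (Fin n → ℝ) → ℝ) (x : Fin n → ℝ) : Fin n → ℝ :=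
  fun k => pd f k x

/-- Laplacian. -/
def lap {n : ℕ} (f : (Fin n → ℝ) → ℝ) (x : Fin n → ℝ) : ℝ :=
  ∑ k, pd (pd f k) k x

/-- Divergence of a vector field. -/
def dvg {n : ℕ} (v : (Fin n → ℝ) → (Fin n → ℝ)) (x : Fin n → ℝ) : ℝ :=
  ∑ k, pd (fun y => v y k) k x

/-- Complex partial derivative in direction `k`. -/
def pdC {n : ℕ} (f : (Fin n → ℝ) → ℂ) (k : Fin n) (x : Fin n → ℝ) : ℂ :=
  fderiv ℝ f x (Pi.single k 1)

/-- Complex Laplacian. -/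
def lapC {n : ℕ} (f : (Fin n → ℝ) → ℂ) (x : Fin n → ℝ) : ℂ :=
  ∑ k, fderiv ℝ (fun y => pdC f k y) x (Pi.single k 1)

section AuxPD

variable {n : ℕ} {f g : (Fin n → ℝ) → ℝ} {x : Fin n → ℝ} {k : Fin n}

lemma pd_eq {L : (Fin n → ℝ) →L[ℝ] ℝ} (h : HasFDerivAt f L x) : pd f k x = L (Pi.single k 1) := by
  rw [pd, h.fderiv]

lemma pd_mul (hf : DifferentiableAt ℝ f x) (hg : DifferentiableAt ℝ g x) :
    pd (fun y => f y * g y) k x = pd f k x * g x + f x * pd g k x := by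
  unfold pd; rw [fderiv_fun_mul hf hg]; simp; ring

lemma pd_add (hf : DifferentiableAt ℝ f x) (hg : DifferentiableAt ℝ g x) :
    pd (fun y => f y + g y) k x = pd f k x + pd g k x := by
  unfold pd; rw [fderiv_fun_add hf hg]; simp

lemma pd_const_mul (hf : DifferentiableAt ℝ f x) (c : ℝ) :
    pd (fun y => c * f y) k x = c * pd f k x := by
  unfold pd; rw [fderiv_const_mul hf c]; simp

lemma pd_inv (hg : DifferentiableAt ℝ g x) (h : g x ≠ 0) :
    pd (fun y => (g y)⁻¹) k x = -pd g k x / g x ^ 2 := by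
  have := pd_eq (f := fun y => (g y)⁻¹) (k := k)
    ((hasDerivAt_inv h).comp_hasFDerivAt x hg.hasFDerivAt)
  rw [this]; simp [pd]; field_simp

lemma pd_log (hf : DifferentiableAt ℝ f x) (h : f x ≠ 0) :
    pd (fun y => Real.log (f y)) k x = pd f k x / f x := by
  have := pd_eq (f := fun y => Real.log (f y)) (k := k)
    ((Real.hasDerivAt_log h).comp_hasFDerivAt x hf.hasFDerivAt)
  rw [this]; simp [pd]; field_simp

lemma pd_div (hf : DifferentiableAt ℝ f x) (hg : DifferentiableAt ℝ g x) (h : g x ≠ 0) :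
    pd (fun y => f y / g y) k x = (pd f k x * g x - f x * pd g k x) / g x ^ 2 := by
  have h1 : (fun y => f y / g y) = (fun y => f y * (g y)⁻¹) := by
    funext y; rw [div_eq_mul_inv]
  rw [h1, pd_mul (g := fun y => (g y)⁻¹) hf (hg.inv h), pd_inv hg h]
  field_simp; ring

lemma fderiv_periodic_aux (hf : Differentiable ℝ f) (v : Fin n → ℝ)
    (hper : ∀ y, f (y + v) = f y) (x : Fin n → ℝ) :
    fderiv ℝ f (x + v) = fderiv ℝ f x := by
  have h1 : HasFDerivAt (fun y => f (y + v)) (fderiv ℝ f (x + v)) x := by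
    simpa [Function.comp_def] using ((hf (x + v)).hasFDerivAt).comp x ((hasFDerivAt_id x).add_const v)
  have h2 : (fun y => f (y + v)) = f := funext hper
  rw [h2] at h1
  exact h1.fderiv.symm

end AuxPD

lemma insertNth_one_eq {m : ℕ} (i : Fin (m+1)) (x : Fin m → ℝ) :
    i.insertNth (1:ℝ) x = (i.insertNth (0:ℝ) x) + (Pi.single i 1 : Fin (m+1) → ℝ) := by
  funext j
  refine Fin.succAboveCases i ?_ ?_ j
  · simp
  · intro l
    simp [Fin.insertNth_apply_succAbove, Pi.single_eq_of_ne (Fin.succAbove_ne i l)]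

/-- Integral of the divergence of a smooth periodic vector field over the unit cube vanishes. -/
lemma integral_divergence_zero {n : ℕ} (V : (Fin n → ℝ) → (Fin n → ℝ))
    (hV : ContDiff ℝ (⊤ : ℕ∞) V) (hper : ∀ x k, V (x + Pi.single k 1) = V x) :
    ∫ x in Set.Icc (0 : Fin n → ℝ) 1, (∑ i, fderiv ℝ V x (Pi.single i 1) i) = 0 := by
  cases n with
  | zero => simp
  | succ m =>
    have hcont : Continuous fun x => ∑ i, fderiv ℝ V x (Pi.single i 1) i := by
      refine continuous_finset_sum _ fun i _ => ?_
      exact (continuous_apply i).comp ((hV.continuous_fderiv (by simp)).clm_apply continuous_const)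
    have := integral_divergence_of_hasFDerivAt_off_countable
      (0 : Fin (m+1) → ℝ) 1 (fun i => zero_le_one) V (fun x => fderiv ℝ V x) ∅ Set.countable_empty
      (hV.continuous.continuousOn)
      (fun x _ => (hV.differentiable (by simp) x).hasFDerivAt)
      (hcont.integrableOn_Icc)
    rw [this]
    refine Finset.sum_eq_zero fun i _ => ?_
    have key : ∀ y : Fin m → ℝ, V (i.insertNth ((1:Fin (m+1)→ℝ) i) y) i
        = V (i.insertNth ((0:Fin (m+1)→ℝ) i) y) i := by
      intro y
      have h1 : ((1:Fin (m+1)→ℝ) i) = (1:ℝ) := rfl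
      rw [h1, insertNth_one_eq, hper]
      rfl
    rw [sub_eq_zero]
    exact setIntegral_congr_fun measurableSet_Icc fun y _ => key y

/-- component-wise partial derivative of a differentiable vector field. -/
lemma fderiv_apply_comp {n : ℕ} {V : (Fin n → ℝ) → (Fin n → ℝ)} (hV : Differentiable ℝ V)
    (x : Fin n → ℝ) (i : Fin n) :
    fderiv ℝ V x (Pi.single i 1) i = pd (fun y => V y i) i x := by
  have h := (hasFDerivAt_pi'.1 (hV x).hasFDerivAt) i
  rw [pd_eq h]
  rfl

theorem stmt_15 (n : ℕ) (μ ξ : (Fin n → ℝ) → ℝ)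
    (hμ : ContDiff ℝ (⊤ : ℕ∞) μ) (hξ : ContDiff ℝ (⊤ : ℕ∞) ξ) (hμpos : ∀ x, 0 < μ x)
    (hμper : ∀ x k, μ (x + Pi.single k 1) = μ x)
    (hξper : ∀ x k, ξ (x + Pi.single k 1) = ξ x) :
    HasDerivAt
      (fun ε => ∫ x in Set.Icc (0 : Fin n → ℝ) 1,
        (∑ k, (grad (fun y => Real.log (μ y + ε * ξ y)) x k)^2) * (μ x + ε * ξ x))
      (∫ x in Set.Icc (0 : Fin n → ℝ) 1,
        ((∑ k, (grad (fun y => Real.log (μ y)) x k)^2) - (2 / μ x) * lap μ x) * ξ x)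
      0 := by
  classical
  have hμd : Differentiable ℝ μ := hμ.differentiable (by simp)
  have hξd : Differentiable ℝ ξ := hξ.differentiable (by simp)
  -- smoothness and continuity of the partial derivatives
  have hpdμ : ∀ k, ContDiff ℝ (⊤ : ℕ∞) (pd μ k) := fun k =>
    (hμ.fderiv_right (by simp)).clm_apply contDiff_const
  have hpdξ : ∀ k, ContDiff ℝ (⊤ : ℕ∞) (pd ξ k) := fun k =>
    (hξ.fderiv_right (by simp)).clm_apply contDiff_const
  have hpdμd : ∀ k, Differentiable ℝ (pd μ k) := fun k => (hpdμ k).differentiable (by simp)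
  -- minimum of μ
  obtain ⟨x₀, hx₀, hmin⟩ := isCompact_Icc.exists_isMinOn
    (Set.nonempty_Icc.mpr (fun i => zero_le_one)) (hμ.continuous.continuousOn)
    (s := Set.Icc (0 : Fin n → ℝ) 1)
  set c : ℝ := μ x₀ with hc
  have hcpos : 0 < c := hμpos x₀
  -- bound for ξ
  obtain ⟨M, hM⟩ := isCompact_Icc.exists_bound_of_continuousOn
    (hξ.continuous.continuousOn (s := Set.Icc (0 : Fin n → ℝ) 1))
  set M' : ℝ := max M 0 with hM'
  have hM'0 : 0 ≤ M' := le_max_right M 0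
  have hMle : ∀ x ∈ Set.Icc (0 : Fin n → ℝ) 1, |ξ x| ≤ M' := fun x hx =>
    le_trans (hM x hx) (le_max_left M 0)
  set ε₀ : ℝ := c / (2 * (M' + 1)) with hε₀def
  have hε₀ : 0 < ε₀ := div_pos hcpos (by nlinarith)
  -- uniform positivity
  have hpos : ∀ ε : ℝ, |ε| ≤ ε₀ → ∀ x ∈ Set.Icc (0 : Fin n → ℝ) 1, c / 2 ≤ μ x + ε * ξ x := by
    intro ε hε x hx
    have h1 : c ≤ μ x := hmin hx
    have h2 : |ξ x| ≤ M' := hMle x hx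
    have h4 : |ε * ξ x| ≤ ε₀ * M' := by
      rw [abs_mul]
      exact mul_le_mul hε h2 (abs_nonneg _) hε₀.le
    have h5 : ε₀ * M' ≤ c / 2 := by
      rw [hε₀def]
      rw [div_mul_eq_mul_div, div_le_div_iff₀ (by nlinarith) (by norm_num)]
      nlinarith
    nlinarith [neg_abs_le (ε * ξ x), abs_nonneg (ε * ξ x)]
  have hposball : ∀ ε ∈ Metric.ball (0:ℝ) ε₀, ∀ x ∈ Set.Icc (0 : Fin n → ℝ) 1,
      0 < μ x + ε * ξ x := by
    intro ε hε x hx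
    have : |ε| ≤ ε₀ := by
      rw [Metric.mem_ball, Real.dist_eq, sub_zero] at hε
      exact hε.le
    linarith [hpos ε this x hx]
  -- the substitute integrand and its ε-derivative
  set G : ℝ → (Fin n → ℝ) → ℝ := fun ε x =>
    (∑ k, (pd μ k x + ε * pd ξ k x)^2) / (μ x + ε * ξ x) with hGdef
  set G' : ℝ → (Fin n → ℝ) → ℝ := fun ε x =>
    ((∑ k, 2 * (pd μ k x + ε * pd ξ k x) * pd ξ k x) * (μ x + ε * ξ x)
      - (∑ k, (pd μ k x + ε * pd ξ k x)^2) * ξ x) / (μ x + ε * ξ x) ^ 2 with hG'def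
  have hNumCont : ∀ ε : ℝ, Continuous fun x => ∑ k, (pd μ k x + ε * pd ξ k x)^2 := by
    intro ε
    exact continuous_finset_sum _ fun k _ =>
      (((hpdμ k).continuous).add (continuous_const.mul (hpdξ k).continuous)).pow 2
  have hDenCont : ∀ ε : ℝ, Continuous fun x => μ x + ε * ξ x := fun ε =>
    hμ.continuous.add (continuous_const.mul hξ.continuous)
  have hNum2Cont : ∀ ε : ℝ, Continuous fun x =>
      ∑ k, 2 * (pd μ k x + ε * pd ξ k x) * pd ξ k x := by
    intro ε
    exact continuous_finset_sum _ fun k _ =>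
      ((continuous_const.mul (((hpdμ k).continuous).add
        (continuous_const.mul (hpdξ k).continuous))).mul (hpdξ k).continuous)
  -- measurability
  have hGmeas : ∀ ε : ℝ, AEStronglyMeasurable (G ε)
      (volume.restrict (Set.Icc (0 : Fin n → ℝ) 1)) := by
    intro ε
    exact ((hNumCont ε).measurable.div (hDenCont ε).measurable).aestronglyMeasurable
  have hG'meas : AEStronglyMeasurable (G' 0)
      (volume.restrict (Set.Icc (0 : Fin n → ℝ) 1)) := by
    refine (Measurable.div ?_ ?_).aestronglyMeasurable
    · exact ((hNum2Cont 0).measurable.mul (hDenCont 0).measurable).sub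
        ((hNumCont 0).measurable.mul hξ.continuous.measurable)
    · exact ((hDenCont 0).pow 2).measurable
  -- integrability of G 0
  have hG0int : Integrable (G 0) (volume.restrict (Set.Icc (0 : Fin n → ℝ) 1)) := by
    refine ContinuousOn.integrableOn_compact isCompact_Icc ?_
    refine ContinuousOn.div (hNumCont 0).continuousOn (hDenCont 0).continuousOn ?_
    intro x hx
    exact (hposball 0 (Metric.mem_ball_self hε₀) x hx).ne'
  -- uniform bound for G'
  have hKcompact : IsCompact ((Set.Icc (-ε₀) ε₀) ×ˢ (Set.Icc (0 : Fin n → ℝ) 1)) :=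
    isCompact_Icc.prod isCompact_Icc
  have hG'contOn : ContinuousOn (fun p : ℝ × (Fin n → ℝ) => G' p.1 p.2)
      ((Set.Icc (-ε₀) ε₀) ×ˢ (Set.Icc (0 : Fin n → ℝ) 1)) := by
    have hden : Continuous fun p : ℝ × (Fin n → ℝ) => μ p.2 + p.1 * ξ p.2 :=
      (hμ.continuous.comp continuous_snd).add
        (continuous_fst.mul (hξ.continuous.comp continuous_snd))
    have hnum : Continuous fun p : ℝ × (Fin n → ℝ) =>
        (∑ k, 2 * (pd μ k p.2 + p.1 * pd ξ k p.2) * pd ξ k p.2) * (μ p.2 + p.1 * ξ p.2)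
          - (∑ k, (pd μ k p.2 + p.1 * pd ξ k p.2)^2) * ξ p.2 := by
      refine Continuous.sub (Continuous.mul ?_ hden) (Continuous.mul ?_
        (hξ.continuous.comp continuous_snd))
      · exact continuous_finset_sum _ fun k _ =>
          (continuous_const.mul (((hpdμ k).continuous.comp continuous_snd).add
            (continuous_fst.mul ((hpdξ k).continuous.comp continuous_snd)))).mul
            ((hpdξ k).continuous.comp continuous_snd)
      · exact continuous_finset_sum _ fun k _ =>
          (((hpdμ k).continuous.comp continuous_snd).add
            (continuous_fst.mul ((hpdξ k).continuous.comp continuous_snd))).pow 2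
    refine ContinuousOn.div hnum.continuousOn (hden.pow 2).continuousOn ?_
    rintro ⟨ε, x⟩ ⟨hε, hx⟩
    have h1 : |ε| ≤ ε₀ := abs_le.mpr ⟨hε.1, hε.2⟩
    have h2 : 0 < μ x + ε * ξ x := lt_of_lt_of_le (by linarith) (hpos ε h1 x hx)
    exact pow_ne_zero 2 h2.ne'
  obtain ⟨C, hC⟩ := hKcompact.exists_bound_of_continuousOn hG'contOn
  -- a.e. bound
  have h_bound : ∀ᵐ x ∂(volume.restrict (Set.Icc (0 : Fin n → ℝ) 1)),
      ∀ ε ∈ Metric.ball (0:ℝ) ε₀, ‖G' ε x‖ ≤ C := by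
    filter_upwards [ae_restrict_mem measurableSet_Icc] with x hx ε hε
    have h1 : |ε| ≤ ε₀ := by
      rw [Metric.mem_ball, Real.dist_eq, sub_zero] at hε
      exact hε.le
    exact hC (ε, x) ⟨Set.mem_Icc.mpr (abs_le.mp h1), hx⟩
  -- differentiability in ε
  have h_diff : ∀ᵐ x ∂(volume.restrict (Set.Icc (0 : Fin n → ℝ) 1)),
      ∀ ε ∈ Metric.ball (0:ℝ) ε₀, HasDerivAt (fun ε => G ε x) (G' ε x) ε := by
    filter_upwards [ae_restrict_mem measurableSet_Icc] with x hx ε hε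
    have hne : μ x + ε * ξ x ≠ 0 := (hposball ε hε x hx).ne'
    have hNum : HasDerivAt (fun ε : ℝ => ∑ k, (pd μ k x + ε * pd ξ k x)^2)
        (∑ k, 2 * (pd μ k x + ε * pd ξ k x) * pd ξ k x) ε := by
      refine HasDerivAt.fun_sum fun k _ => ?_
      have h1 : HasDerivAt (fun ε : ℝ => pd μ k x + ε * pd ξ k x) (pd ξ k x) ε := by
        simpa using ((hasDerivAt_id ε).mul_const (pd ξ k x)).const_add (pd μ k x)
      simpa using h1.fun_pow 2
    have hDen : HasDerivAt (fun ε : ℝ => μ x + ε * ξ x) (ξ x) ε := by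
      simpa using ((hasDerivAt_id ε).mul_const (ξ x)).const_add (μ x)
    exact hNum.div hDen hne
  -- dominated differentiation under the integral
  obtain ⟨-, hder⟩ := hasDerivAt_integral_of_dominated_loc_of_deriv_le (Metric.ball_mem_nhds (0:ℝ) hε₀)
    (Filter.Eventually.of_forall hGmeas) hG0int hG'meas h_bound
    (((integrableOn_const_iff (C := C)).mpr (Or.inr isCompact_Icc.measure_lt_top)) :
      IntegrableOn (fun _ => C) (Set.Icc (0 : Fin n → ℝ) 1) volume) h_diff
  -- the original integrand agrees with G near 0
  have hEq : (fun ε => ∫ x in Set.Icc (0 : Fin n → ℝ) 1,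
        (∑ k, (grad (fun y => Real.log (μ y + ε * ξ y)) x k)^2) * (μ x + ε * ξ x))
      =ᶠ[nhds (0:ℝ)] (fun ε => ∫ x in Set.Icc (0 : Fin n → ℝ) 1, G ε x) := by
    filter_upwards [Metric.ball_mem_nhds (0:ℝ) hε₀] with ε hε
    refine setIntegral_congr_fun measurableSet_Icc fun x hx => ?_
    have hdpos : 0 < μ x + ε * ξ x := hposball ε hε x hx
    have hdiffs : DifferentiableAt ℝ (fun y => μ y + ε * ξ y) x :=
      (hμd x).add ((hξd x).const_mul ε)
    have hgl : ∀ k, grad (fun y => Real.log (μ y + ε * ξ y)) x k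
        = (pd μ k x + ε * pd ξ k x) / (μ x + ε * ξ x) := by
      intro k
      show pd (fun y => Real.log (μ y + ε * ξ y)) k x = _
      rw [pd_log hdiffs hdpos.ne', pd_add (hμd x) ((hξd x).const_mul ε),
        pd_const_mul (hξd x) ε]
    simp only [hgl, div_pow]
    rw [← Finset.sum_div, hGdef]
    field_simp
  rw [hEq.hasDerivAt_iff]
  -- it remains to identify the two integrals for the derivative
  convert hder using 1
  -- the vector field for integration by parts
  set V : (Fin n → ℝ) → (Fin n → ℝ) := fun y k => 2 * pd μ k y * ξ y / μ y with hVdef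
  have hVsmooth : ContDiff ℝ (⊤ : ℕ∞) V := by
    rw [contDiff_pi]
    intro k
    exact ((contDiff_const.mul (hpdμ k)).mul hξ).div hμ (fun y => (hμpos y).ne')
  have hVd : Differentiable ℝ V := hVsmooth.differentiable (by simp)
  have hVper : ∀ x k, V (x + Pi.single k 1) = V x := by
    intro x j
    funext k
    show 2 * pd μ k (x + Pi.single j 1) * ξ (x + Pi.single j 1) / μ (x + Pi.single j 1) = _
    have h1 : pd μ k (x + Pi.single j 1) = pd μ k x := by
      unfold pd
      rw [fderiv_periodic_aux hμd (Pi.single j 1) (fun y => hμper y j) x]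
    rw [h1, hξper, hμper]
  have hIBP := integral_divergence_zero V hVsmooth hVper
  -- pointwise identity : G' 0 = divergence of V + target integrand
  have hptw : ∀ x, G' 0 x
      = (∑ k, pd (fun y => V y k) k x)
        + ((∑ k, (grad (fun y => Real.log (μ y)) x k)^2) - (2 / μ x) * lap μ x) * ξ x := by
    intro x
    have hμx : μ x ≠ 0 := (hμpos x).ne'
    have hWk : ∀ k, pd (fun y => V y k) k x
        = 2 * pd (pd μ k) k x * ξ x / μ x + 2 * pd μ k x * pd ξ k x / μ x
          - 2 * (pd μ k x)^2 * ξ x / μ x ^ 2 := by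
      intro k
      show pd (fun y => 2 * pd μ k y * ξ y / μ y) k x = _
      rw [pd_div (f := fun y => 2 * pd μ k y * ξ y) (((hpdμd k x).const_mul 2).mul (hξd x)) (hμd x) hμx,
        pd_mul ((hpdμd k x).const_mul 2) (hξd x), pd_const_mul (hpdμd k x) 2]
      field_simp
    have hgl : ∀ k, grad (fun y => Real.log (μ y)) x k = pd μ k x / μ x := by
      intro k
      show pd (fun y => Real.log (μ y)) k x = _
      rw [pd_log (hμd x) hμx]
    simp only [hWk, hgl, div_pow, lap, hG'def, zero_mul, add_zero, mul_zero]
    rw [← Finset.sum_div]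
    have e0 : ∑ k, 2 * pd μ k x * pd ξ k x = 2 * ∑ k, pd μ k x * pd ξ k x := by
      rw [Finset.mul_sum]; exact Finset.sum_congr rfl fun k _ => by ring
    have e1 : ∑ k, (2 * pd (pd μ k) k x * ξ x / μ x + 2 * pd μ k x * pd ξ k x / μ x
          - 2 * (pd μ k x)^2 * ξ x / μ x ^ 2)
        = (2 * ξ x / μ x) * (∑ k, pd (pd μ k) k x)
          + (2 / μ x) * (∑ k, pd μ k x * pd ξ k x)
          - (2 * ξ x / μ x ^ 2) * (∑ k, (pd μ k x)^2) := by
      rw [Finset.mul_sum, Finset.mul_sum, Finset.mul_sum, ← Finset.sum_add_distrib,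
        ← Finset.sum_sub_distrib]
      exact Finset.sum_congr rfl fun k _ => by ring
    rw [e0, e1]
    field_simp
    ring
  have hWcont : ∀ k : Fin n, Continuous fun x => pd (fun y => V y k) k x := by
    intro k
    have : ContDiff ℝ (⊤ : ℕ∞) fun y => V y k := by
      exact ((contDiff_const.mul (hpdμ k)).mul hξ).div hμ (fun y => (hμpos y).ne')
    exact (this.continuous_fderiv (by simp)).clm_apply continuous_const
  have hRcont : Continuous fun x =>
      ((∑ k, (grad (fun y => Real.log (μ y)) x k)^2) - (2 / μ x) * lap μ x) * ξ x := by
    have hgl : ∀ k, Continuous fun x => grad (fun y => Real.log (μ y)) x k := by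
      intro k
      have : ∀ x, grad (fun y => Real.log (μ y)) x k = pd μ k x / μ x := by
        intro x
        show pd (fun y => Real.log (μ y)) k x = _
        rw [pd_log (hμd x) (hμpos x).ne']
      simp only [this]
      exact (hpdμ k).continuous.div hμ.continuous (fun x => (hμpos x).ne')
    have hlapc : Continuous fun x => lap μ x := by
      refine continuous_finset_sum _ fun k _ => ?_
      exact ((hpdμ k).continuous_fderiv (by simp)).clm_apply continuous_const
    refine Continuous.mul (Continuous.sub ?_ ?_) hξ.continuous
    · exact continuous_finset_sum _ fun k _ => (hgl k).pow 2
    · exact (continuous_const.div hμ.continuous (fun x => (hμpos x).ne')).mul hlapc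
  -- identify the integrals
  have hsplit : ∫ x in Set.Icc (0 : Fin n → ℝ) 1, G' 0 x
      = (∫ x in Set.Icc (0 : Fin n → ℝ) 1, ∑ k, pd (fun y => V y k) k x)
        + ∫ x in Set.Icc (0 : Fin n → ℝ) 1,
            ((∑ k, (grad (fun y => Real.log (μ y)) x k)^2) - (2 / μ x) * lap μ x) * ξ x := by
    rw [← integral_add]
    · exact setIntegral_congr_fun measurableSet_Icc fun x _ => hptw x
    · exact (continuous_finset_sum _ fun k _ => hWcont k).continuousOn.integrableOn_compact
        isCompact_Icc
    · exact hRcont.continuousOn.integrableOn_compact isCompact_Icc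
  have hIBP' : ∫ x in Set.Icc (0 : Fin n → ℝ) 1, (∑ k, pd (fun y => V y k) k x) = 0 := by
    rw [← hIBP]
    exact setIntegral_congr_fun measurableSet_Icc fun x _ =>
      (Finset.sum_congr rfl fun i _ => (fderiv_apply_comp hVd x i)).symm
  rw [hsplit, hIBP', zero_add]
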